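/- Let G = (V,E) be a finite undirected graph, let γ > 0, and let P* be an optimal partition of V for the CPM quality function with resolution parameter γ. Then every community C* ∈ P* is uniformly γ-dense: for every subset S ⊆ C* with complement R = C* − S, one has E(S,R) ≥ γ·|S|·|R|. -/
import Mathlib


open Finset

variable {V : Type*}

/-- `eBetween G S T` is the number of adjacent pairs `(u, v)` with `u ∈ S` and `v ∈ T`.
For disjoint `S` and `T` this is the number of edges between `S` and `T`. -/
noncomputable def eBetween (G : SimpleGraph V) [DecidableRel G.Adj] (S T : Finset V) : ℝ :=
  ∑ u ∈ S, ∑ v ∈ T, if G.Adj u v then (1 : ℝ) else 0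

/-- The Constant Potts Model quality function with resolution parameter `γ`:
`H(P) = Σ_{C ∈ P} [E(C,C) − γ·|C|(|C|−1)/2]`. -/
noncomputable def cpmQuality (G : SimpleGraph V) [DecidableRel G.Adj] (γ : ℝ)
    (P : Finset (Finset V)) : ℝ :=
  ∑ C ∈ P, (eBetween G C C / 2 - γ * (C.card : ℝ) * ((C.card : ℝ) - 1) / 2)

/-- `P` is a partition of `V` into nonempty communities. -/
def IsPartition [Fintype V] (P : Finset (Finset V)) : Prop :=
  (∀ C ∈ P, C.Nonempty) ∧ ∀ v : V, ∃! C, C ∈ P ∧ v ∈ C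

lemma eBetween_nonneg (G : SimpleGraph V) [DecidableRel G.Adj] (S T : Finset V) :
    0 ≤ eBetween G S T := by
  refine Finset.sum_nonneg fun u _ => Finset.sum_nonneg fun v _ => ?_
  split <;> norm_num

lemma eBetween_symm (G : SimpleGraph V) [DecidableRel G.Adj] (S T : Finset V) :
    eBetween G S T = eBetween G T S := by
  rw [eBetween, eBetween, Finset.sum_comm]
  apply Finset.sum_congr rfl; intro u _
  apply Finset.sum_congr rfl; intro v _
  exact if_congr (G.adj_comm v u) rfl rfl

lemma eBetween_union_left [DecidableEq V] (G : SimpleGraph V) [DecidableRel G.Adj]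
    {S R : Finset V} (h : Disjoint S R) (T : Finset V) :
    eBetween G (S ∪ R) T = eBetween G S T + eBetween G R T := by
  rw [eBetween, Finset.sum_union h]; rfl

lemma eBetween_union_right [DecidableEq V] (G : SimpleGraph V) [DecidableRel G.Adj]
    {S R : Finset V} (h : Disjoint S R) (T : Finset V) :
    eBetween G T (S ∪ R) = eBetween G T S + eBetween G T R := by
  rw [eBetween_symm, eBetween_union_left G h, eBetween_symm G S T, eBetween_symm G R T]

/-- **Theorem.** Every community of an optimal CPM partition is uniformly `γ`-dense:
for every `C* ∈ P*` and every `S ⊆ C*` with `R = C* − S`, we have `E(S,R) ≥ γ·|S|·|R|`. -/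
theorem optimal_partition_uniformly_gamma_dense
    [Fintype V] [DecidableEq V] (G : SimpleGraph V) [DecidableRel G.Adj]
    (γ : ℝ) (hγ : 0 < γ)
    (Pstar : Finset (Finset V)) (hPstar : IsPartition Pstar)
    (hopt : ∀ P : Finset (Finset V), IsPartition P →
      cpmQuality G γ P ≤ cpmQuality G γ Pstar) :
    ∀ C ∈ Pstar, ∀ S ⊆ C,
      γ * (S.card : ℝ) * (((C \ S).card : ℝ)) ≤ eBetween G S (C \ S) := by
  intro C hC S hS
  set R : Finset V := C \ S with hR
  rcases S.eq_empty_or_nonempty with hSe | hSne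
  · simp [hSe, eBetween_nonneg]
  rcases R.eq_empty_or_nonempty with hRe | hRne
  · simp [hRe, eBetween_nonneg]
  -- basic set facts
  have hdisjSR : Disjoint S R := Finset.disjoint_sdiff
  have hunion : S ∪ R = C := Finset.union_sdiff_of_subset hS
  have hRsub : R ⊆ C := Finset.sdiff_subset
  have hSneR : S ≠ R := by
    intro h
    obtain ⟨x, hx⟩ := hSne
    exact (Finset.mem_sdiff.mp (h ▸ hx)).2 hx
  -- pairwise disjointness consequence
  have hkey : ∀ D ∈ Pstar, D ≠ C → ∀ v ∈ D, v ∉ C := by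
    intro D hD hne v hvD hvC
    exact hne ((hPstar.2 v).unique ⟨hD, hvD⟩ ⟨hC, hvC⟩)
  have hSnotE : S ∉ Pstar.erase C := by
    intro h
    obtain ⟨x, hx⟩ := hSne
    exact hkey S (Finset.mem_of_mem_erase h) (Finset.ne_of_mem_erase h) x hx (hS hx)
  have hRnotE : R ∉ Pstar.erase C := by
    intro h
    obtain ⟨x, hx⟩ := hRne
    exact hkey R (Finset.mem_of_mem_erase h) (Finset.ne_of_mem_erase h) x hx (hRsub hx)
  have hSnot : S ∉ insert R (Pstar.erase C) := by
    simp only [Finset.mem_insert]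
    rintro (h | h); exact hSneR h; exact hSnotE h
  set P' : Finset (Finset V) := insert S (insert R (Pstar.erase C)) with hP'def
  have hP' : IsPartition P' := by
    constructor
    · intro D hD
      simp only [hP'def, Finset.mem_insert] at hD
      rcases hD with rfl | rfl | hD
      · exact hSne
      · exact hRne
      · exact hPstar.1 D (Finset.mem_of_mem_erase hD)
    · intro v
      obtain ⟨D, ⟨hD, hvD⟩, huniq⟩ := hPstar.2 v
      by_cases hvC : v ∈ C
      · have hDC : D = C := huniq C ⟨hC, hvC⟩ ▸ rfl
        by_cases hvS : v ∈ S
        · refine ⟨S, ⟨Finset.mem_insert_self _ _, hvS⟩, ?_⟩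
          rintro D' ⟨hD', hvD'⟩
          simp only [hP'def, Finset.mem_insert] at hD'
          rcases hD' with rfl | rfl | hD'
          · rfl
          · exact absurd hvS (Finset.mem_sdiff.mp hvD').2
          · exact absurd hvC (hkey D' (Finset.mem_of_mem_erase hD')
              (Finset.ne_of_mem_erase hD') v hvD')
        · have hvR : v ∈ R := Finset.mem_sdiff.mpr ⟨hvC, hvS⟩
          refine ⟨R, ⟨Finset.mem_insert_of_mem (Finset.mem_insert_self _ _), hvR⟩, ?_⟩
          rintro D' ⟨hD', hvD'⟩
          simp only [hP'def, Finset.mem_insert] at hD'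
          rcases hD' with rfl | rfl | hD'
          · exact absurd hvD' hvS
          · rfl
          · exact absurd hvC (hkey D' (Finset.mem_of_mem_erase hD')
              (Finset.ne_of_mem_erase hD') v hvD')
      · have hDne : D ≠ C := fun h => hvC (h ▸ hvD)
        refine ⟨D, ⟨Finset.mem_insert_of_mem (Finset.mem_insert_of_mem
          (Finset.mem_erase.mpr ⟨hDne, hD⟩)), hvD⟩, ?_⟩
        rintro D' ⟨hD', hvD'⟩
        simp only [hP'def, Finset.mem_insert] at hD'
        rcases hD' with rfl | rfl | hD'
        · exact absurd (hS hvD') hvC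
        · exact absurd (hRsub hvD') hvC
        · exact huniq D' ⟨Finset.mem_of_mem_erase hD', hvD'⟩
  -- quality computation
  have hle := hopt P' hP'
  set f : Finset V → ℝ :=
    fun D => eBetween G D D / 2 - γ * (D.card : ℝ) * ((D.card : ℝ) - 1) / 2 with hf
  have hQ' : cpmQuality G γ P' = f S + f R + ∑ D ∈ Pstar.erase C, f D := by
    rw [hP'def, cpmQuality, Finset.sum_insert hSnot, Finset.sum_insert hRnotE, add_assoc]
  have hQ : cpmQuality G γ Pstar = f C + ∑ D ∈ Pstar.erase C, f D := by
    rw [cpmQuality, ← Finset.add_sum_erase Pstar f hC]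
  rw [hQ', hQ] at hle
  have hfle : f S + f R ≤ f C := by linarith
  -- expand f C
  have hcard : (C.card : ℝ) = S.card + R.card := by
    rw [← hunion, Finset.card_union_of_disjoint hdisjSR]; push_cast; ring
  have hE : eBetween G C C
      = eBetween G S S + eBetween G S R + eBetween G R S + eBetween G R R := by
    rw [← hunion, eBetween_union_left G hdisjSR, eBetween_union_right G hdisjSR,
      eBetween_union_right G hdisjSR]
    ring
  have hsymm : eBetween G R S = eBetween G S R := eBetween_symm G R S
  simp only [hf] at hfle
  rw [hE, hsymm, hcard] at hfle
  nlinarith [hfle]
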